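/- arXiv:1407.2691 — 2 statements merged into one kernel-verified Lean document; each statement's English description precedes it below -/
import Mathlib

section
/- Let T be a finite-dimensional semisimple Λ-module with projective cover P, and let C ⊆ JP be a submodule. Then f(C) ⊆ C for every Λ-homomorphism f : P → JP if and only if dim_K Hom_Λ(P, JP/C) = dim_K Hom_Λ(P/C, JP/C). -/
open Submodule

/-- The submodule `J•M` of `M`, where `J` is the Jacobson radical of `Λ`. -/
def radsub (Λ : Type) [Ring Λ] (M : Type) [AddCommGroup M] [Module Λ M] :
    Submodule Λ M :=
  Submodule.span Λ {x : M | ∃ a ∈ (⊥ : Ideal Λ).jacobson, ∃ m : M, x = a • m}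

/-- Riedtmann–Zwara: `N` is a degeneration of `M` if there is a short exact sequence
`0 → Z → Z ⊕ M → N → 0` for some finite `Λ`-module `Z`. -/
def IsDegeneration (Λ : Type) [Ring Λ] (M N : Type) [AddCommGroup M] [Module Λ M]
    [AddCommGroup N] [Module Λ N] : Prop :=
  ∃ (Z : Type) (_ : AddCommGroup Z) (_ : Module Λ Z) (_ : Module.Finite Λ Z)
    (f : Z →ₗ[Λ] Z × M) (g : Z × M →ₗ[Λ] N),
      Function.Injective f ∧ Function.Surjective g ∧
        LinearMap.range f = LinearMap.ker g

/-- A degeneration is top-stable if it has the same top `M/JM`. -/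
def IsTopStableDegeneration (Λ : Type) [Ring Λ] (M N : Type) [AddCommGroup M] [Module Λ M]
    [AddCommGroup N] [Module Λ N] : Prop :=
  IsDegeneration Λ M N ∧
    Nonempty ((N ⧸ radsub Λ N) ≃ₗ[Λ] (M ⧸ radsub Λ M))

/-- `M` has no proper top-stable degeneration. -/
def HasNoProperTopStableDegeneration (Λ : Type) [Ring Λ] (M : Type) [AddCommGroup M]
    [Module Λ M] : Prop :=
  ∀ (N : Type) (_ : AddCommGroup N) (_ : Module Λ N) (_ : Module.Finite Λ N),
    IsTopStableDegeneration Λ M N → Nonempty (N ≃ₗ[Λ] M)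

/-- The left ideal `Λx` as a submodule of `Λ`. -/
def Pe (Λ : Type) [Ring Λ] (x : Λ) : Submodule Λ Λ := Submodule.span Λ {x}

/-- The left ideal `Jx` as a submodule of `Λ`. -/
def Je (Λ : Type) [Ring Λ] (x : Λ) : Submodule Λ Λ :=
  Submodule.span Λ {y : Λ | ∃ a ∈ (⊥ : Ideal Λ).jacobson, y = a * x}

/-- The `K`-subspace of `Hom_Λ(P, M)` consisting of the maps with image inside the
submodule `W` of `M`; used to express `Hom_Λ(P, W)` as a `K`-vector space. -/
def homInto (K : Type) [CommSemiring K] (Λ : Type) [Ring Λ] [Algebra K Λ]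
    (P M : Type) [AddCommGroup P] [Module Λ P] [AddCommGroup M] [Module K M] [Module Λ M]
    [IsScalarTower K Λ M] [SMulCommClass Λ K M] (W : Submodule Λ M) :
    Submodule K (P →ₗ[Λ] M) where
  carrier := {f | LinearMap.range f ≤ W}
  zero_mem' := by rintro x ⟨y, rfl⟩; simp
  add_mem' := by
    intro f g hf hg
    rintro x ⟨y, rfl⟩
    exact W.add_mem (hf ⟨y, rfl⟩) (hg ⟨y, rfl⟩)
  smul_mem' := by
    intro k f hf
    rintro x ⟨y, rfl⟩
    have h1 : (k • f) y = (algebraMap K Λ k) • f y := by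
      rw [LinearMap.smul_apply, algebraMap_smul]
    rw [h1]
    exact W.smul_mem _ (hf ⟨y, rfl⟩)

/-!
Precomposition with `P → P/C` embeds `Hom(P/C, J(P/C))` into `Hom(P, J(P/C))`, so the two
dimensions agree iff this embedding is onto, i.e. iff every map `P → J(P/C)` kills `C`. Since
`C ⊆ JP`, the preimage of `J(P/C)` in `P` is `JP`; so, `P` being projective, the maps
`P → J(P/C)` are exactly the reductions of the maps `P → JP`, and such a reduction kills `C` iff
the map sends `C` into `C`.
-/

section Radical

variable {Λ : Type} [Ring Λ] {M N : Type} [AddCommGroup M] [Module Λ M]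
  [AddCommGroup N] [Module Λ N]

lemma radsub_map_of_surjective (g : M →ₗ[Λ] N) (hg : Function.Surjective g) :
    (radsub Λ M).map g = radsub Λ N := by
  rw [radsub, radsub, Submodule.map_span]
  congr 1
  ext x
  constructor
  · rintro ⟨-, ⟨a, ha, m, rfl⟩, rfl⟩
    exact ⟨a, ha, g m, map_smul g a m⟩
  · rintro ⟨a, ha, n, rfl⟩
    obtain ⟨m, rfl⟩ := hg n
    exact ⟨a • m, ⟨a, ha, m, rfl⟩, map_smul g a m⟩

lemma comap_mkQ_radsub {C : Submodule Λ M} (hC : C ≤ radsub Λ M) :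
    (radsub Λ (M ⧸ C)).comap C.mkQ = radsub Λ M := by
  rw [← radsub_map_of_surjective C.mkQ C.mkQ_surjective, Submodule.comap_map_mkQ,
    sup_eq_right.mpr hC]

lemma range_mkQ_comp_le_radsub_iff {X : Type} [AddCommGroup X] [Module Λ X]
    {C : Submodule Λ M} (hC : C ≤ radsub Λ M) (f : X →ₗ[Λ] M) :
    LinearMap.range (C.mkQ ∘ₗ f) ≤ radsub Λ (M ⧸ C) ↔ LinearMap.range f ≤ radsub Λ M := by
  rw [LinearMap.range_comp, Submodule.map_le_iff_le_comap, comap_mkQ_radsub hC]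

end Radical

section HomInto

variable {K : Type} [Field K] {Λ : Type} [Ring Λ] [Algebra K Λ]
  {P M : Type} [AddCommGroup P] [Module Λ P]
  [AddCommGroup M] [Module K M] [Module Λ M] [IsScalarTower K Λ M] [SMulCommClass Λ K M]

@[simp]
lemma mem_homInto {W : Submodule Λ M} {f : P →ₗ[Λ] M} :
    f ∈ homInto K Λ P M W ↔ LinearMap.range f ≤ W :=
  Iff.rfl

instance [Module K P] [IsScalarTower K Λ P] [FiniteDimensional K P] [FiniteDimensional K M]
    (W : Submodule Λ M) : FiniteDimensional K (homInto K Λ P M W) :=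
  have : FiniteDimensional K (P →ₗ[Λ] M) :=
    .of_injective (LinearMap.restrictScalarsₗ K Λ P M K) (LinearMap.restrictScalars_injective K)
  inferInstance

variable (K) in
def homIntoPrecompMkQ (C : Submodule Λ P) (W : Submodule Λ M) :
    homInto K Λ (P ⧸ C) M W →ₗ[K] homInto K Λ P M W where
  toFun ψ := ⟨ψ.1 ∘ₗ C.mkQ, by
    rw [mem_homInto, LinearMap.range_comp, Submodule.range_mkQ, Submodule.map_top]
    exact ψ.2⟩
  map_add' _ _ := Subtype.ext (LinearMap.add_comp _ _ _)
  map_smul' _ _ := Subtype.ext (LinearMap.smul_comp _ _ _)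

variable (C : Submodule Λ P) (W : Submodule Λ M)

lemma homIntoPrecompMkQ_injective : Function.Injective (homIntoPrecompMkQ K C W) :=
  fun _ _ h => Subtype.ext <| C.linearMap_qext (congrArg Subtype.val h)

lemma homIntoPrecompMkQ_surjective_iff :
    Function.Surjective (homIntoPrecompMkQ K C W) ↔
      ∀ f : P →ₗ[Λ] M, LinearMap.range f ≤ W → C ≤ LinearMap.ker f := by
  constructor
  · intro hsurj f hf c hc
    obtain ⟨ψ, hψ⟩ := hsurj ⟨f, hf⟩
    have hfψ : f = ψ.1 ∘ₗ C.mkQ := (congrArg Subtype.val hψ).symm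
    rw [LinearMap.mem_ker, hfψ, LinearMap.comp_apply, C.mkQ_apply,
      (Submodule.Quotient.mk_eq_zero C).mpr hc, map_zero]
  · rintro hker ⟨f, hf⟩
    refine ⟨⟨C.liftQ f (hker f hf), ?_⟩, Subtype.ext (C.liftQ_mkQ f (hker f hf))⟩
    rwa [mem_homInto, Submodule.range_liftQ]

lemma homIntoPrecompMkQ_surjective_iff_finrank_eq [Module K P] [IsScalarTower K Λ P]
    [FiniteDimensional K P] [FiniteDimensional K M] :
    Function.Surjective (homIntoPrecompMkQ K C W) ↔
      Module.finrank K (homInto K Λ (P ⧸ C) M W) = Module.finrank K (homInto K Λ P M W) := by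
  have hinj := homIntoPrecompMkQ_injective (K := K) C W
  exact ⟨fun h => (LinearEquiv.ofBijective _ ⟨hinj, h⟩).finrank_eq,
    fun h => (LinearMap.injective_iff_surjective_of_finrank_eq_finrank h).mp hinj⟩

end HomInto

section Projective

variable {Λ : Type} [Ring Λ] {P : Type} [AddCommGroup P] [Module Λ P]

lemma map_le_self_iff_le_ker_mkQ_comp (C : Submodule Λ P) (f : P →ₗ[Λ] P) :
    C.map f ≤ C ↔ C ≤ LinearMap.ker (C.mkQ ∘ₗ f) := by
  rw [LinearMap.ker_comp, Submodule.ker_mkQ, Submodule.map_le_iff_le_comap]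

lemma forall_map_le_self_iff_forall_le_ker [Module.Projective Λ P] {C : Submodule Λ P}
    (hC : C ≤ radsub Λ P) :
    (∀ f : P →ₗ[Λ] P, LinearMap.range f ≤ radsub Λ P → C.map f ≤ C) ↔
      ∀ g : P →ₗ[Λ] P ⧸ C, LinearMap.range g ≤ radsub Λ (P ⧸ C) → C ≤ LinearMap.ker g := by
  simp only [map_le_self_iff_le_ker_mkQ_comp]
  constructor
  · intro h g hg
    obtain ⟨f, rfl⟩ := Module.projective_lifting_property C.mkQ g C.mkQ_surjective
    exact h f ((range_mkQ_comp_le_radsub_iff hC f).mp hg)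
  · exact fun h f hf => h _ ((range_mkQ_comp_le_radsub_iff hC f).mpr hf)

end Projective

theorem invariant_iff_hom_dim_general
    (K : Type) [Field K]
    (Λ : Type) [Ring Λ] [Algebra K Λ]
    -- `P` is a projective cover of `T`
    (P : Type) [AddCommGroup P] [Module K P] [Module Λ P] [IsScalarTower K Λ P]
    [SMulCommClass Λ K P] [FiniteDimensional K P] [Module.Projective Λ P]
    (C : Submodule Λ P) (hC : C ≤ radsub Λ P) :
    (∀ f : P →ₗ[Λ] P, LinearMap.range f ≤ radsub Λ P → Submodule.map f C ≤ C) ↔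
      Module.finrank K ↥(homInto K Λ P (P ⧸ C) (radsub Λ (P ⧸ C))) =
        Module.finrank K ↥(homInto K Λ (P ⧸ C) (P ⧸ C) (radsub Λ (P ⧸ C))) := by
  rw [forall_map_le_self_iff_forall_le_ker hC, ← homIntoPrecompMkQ_surjective_iff (K := K),
    homIntoPrecompMkQ_surjective_iff_finrank_eq, eq_comm]

/-- Invariance of `C` under `Hom_Λ(P, JP)` is equivalent to the `Hom`-dimension condition
`dim_K Hom_Λ(P, JP/C) = dim_K Hom_Λ(P/C, JP/C)` (note `JP/C = J(P/C)` since `C ⊆ JP`). -/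
theorem invariant_iff_hom_dim
    (K : Type) [Field K] [IsAlgClosed K]
    (Λ : Type) [Ring Λ] [Algebra K Λ] [FiniteDimensional K Λ]
    -- `T` is a finite-dimensional semisimple module
    (T : Type) [AddCommGroup T] [Module K T] [Module Λ T] [IsScalarTower K Λ T]
    [FiniteDimensional K T] [IsSemisimpleModule Λ T]
    -- `P` is a projective cover of `T`
    (P : Type) [AddCommGroup P] [Module K P] [Module Λ P] [IsScalarTower K Λ P]
    [SMulCommClass Λ K P] [FiniteDimensional K P] [Module.Projective Λ P]
    (π : P →ₗ[Λ] T) (hπ : Function.Surjective π) (hker : LinearMap.ker π ≤ radsub Λ P)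
    (C : Submodule Λ P) (hC : C ≤ radsub Λ P) :
    (∀ f : P →ₗ[Λ] P, LinearMap.range f ≤ radsub Λ P → Submodule.map f C ≤ C) ↔
      Module.finrank K ↥(homInto K Λ P (P ⧸ C) (radsub Λ (P ⧸ C))) =
        Module.finrank K ↥(homInto K Λ (P ⧸ C) (P ⧸ C) (radsub Λ (P ⧸ C))) :=
  invariant_iff_hom_dim_general K Λ P C hC
end

section
/- Let M be a finite-dimensional left Λ-module and U ⊆ M a top-stably embedded submodule, meaning that JU = U ∩ JM. Then U ⊕ M/U is a top-stable degeneration of M. -/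
open Submodule

/-!
The sequence `0 → U → U ⊕ M → U ⊕ M/U → 0`, `u ↦ (0, u)`, `(u, m) ↦ (u, m + U)`, exhibits
`U ⊕ M/U` as a degeneration of `M`. For the tops, `JU = U ∩ JM` says that `U/JU` embeds into
`M/JM`, with cokernel `M/(U + JM)`, the top of `M/U`. Since `M/JM` is a module over the
semisimple ring `Λ/J`, this sequence splits, so `M/JM ≅ U/JU ⊕ (M/U)/J(M/U)`.
-/

section Radical

variable {Λ : Type} [Ring Λ] {M N : Type} [AddCommGroup M] [Module Λ M] [AddCommGroup N]
  [Module Λ N]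

theorem smul_mem_radsub {a : Λ} (ha : a ∈ (⊥ : Ideal Λ).jacobson) (m : M) :
    a • m ∈ radsub Λ M :=
  subset_span ⟨a, ha, m, rfl⟩

theorem radsub_le_iff {P : Submodule Λ M} :
    radsub Λ M ≤ P ↔ ∀ a ∈ (⊥ : Ideal Λ).jacobson, ∀ m : M, a • m ∈ P := by
  rw [radsub, span_le]
  exact ⟨fun h a ha m => h ⟨a, ha, m, rfl⟩, by rintro h _ ⟨a, ha, m, rfl⟩; exact h a ha m⟩

theorem map_radsub_le (f : M →ₗ[Λ] N) : (radsub Λ M).map f ≤ radsub Λ N := by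
  rw [map_le_iff_le_comap, radsub_le_iff]
  intro a ha m
  simpa using smul_mem_radsub ha (f m)

theorem map_radsub_of_surjective {f : M →ₗ[Λ] N} (hf : Function.Surjective f) :
    (radsub Λ M).map f = radsub Λ N := by
  refine le_antisymm (map_radsub_le f) (radsub_le_iff.mpr fun a ha n => ?_)
  obtain ⟨m, rfl⟩ := hf n
  exact ⟨a • m, smul_mem_radsub ha m, map_smul f a m⟩

theorem radsub_prod : radsub Λ (M × N) = (radsub Λ M).prod (radsub Λ N) := by
  refine le_antisymm (radsub_le_iff.mpr fun a ha m =>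
    ⟨smul_mem_radsub ha m.1, smul_mem_radsub ha m.2⟩) ?_
  rintro ⟨x, y⟩ ⟨hx, hy⟩
  rw [← Prod.fst_add_snd (x, y)]
  exact add_mem (map_radsub_le (LinearMap.inl Λ M N) ⟨x, hx, rfl⟩)
    (map_radsub_le (LinearMap.inr Λ M N) ⟨y, hy, rfl⟩)

theorem isTorsionBySet_quotient_radsub :
    Module.IsTorsionBySet Λ (M ⧸ radsub Λ M) (Ring.jacobson Λ) := by
  rw [Module.isTorsionBySet_quotient_iff]
  intro m a ha
  exact smul_mem_radsub (Ideal.jacobson_bot (R := Λ) ▸ ha) m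

/-- The top `M/JM` is a module over the semisimple ring `Λ/J`. -/
instance isSemisimpleModule_quotient_radsub [IsSemiprimaryRing Λ] :
    IsSemisimpleModule Λ (M ⧸ radsub Λ M) :=
  let h := isTorsionBySet_quotient_radsub (Λ := Λ) (M := M)
  letI := h.module
  (h.semilinearMap.isSemisimpleModule_iff_of_bijective Function.bijective_id).2 inferInstance

noncomputable def quotientRadsubProdEquiv :
    ((M × N) ⧸ radsub Λ (M × N)) ≃ₗ[Λ] (M ⧸ radsub Λ M) × (N ⧸ radsub Λ N) :=
  let φ := LinearMap.prodMap (radsub Λ M).mkQ (radsub Λ N).mkQ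
  have hker : radsub Λ (M × N) = LinearMap.ker φ := by
    rw [LinearMap.ker_prodMap, ker_mkQ, ker_mkQ, radsub_prod]
  (quotEquivOfEq _ _ hker).trans
    (φ.quotKerEquivOfSurjective (Function.Surjective.prodMap (mkQ_surjective _) (mkQ_surjective _)))

end Radical

theorem IsSemisimpleModule.nonempty_prod_quotient_linearEquiv {Λ X : Type} [Ring Λ]
    [AddCommGroup X] [Module Λ X] [IsSemisimpleModule Λ X] (P : Submodule Λ X) :
    Nonempty ((P × (X ⧸ P)) ≃ₗ[Λ] X) :=
  have ⟨Q, hPQ⟩ := exists_isCompl P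
  ⟨((LinearEquiv.refl Λ P).prodCongr (quotientEquivOfIsCompl P Q hPQ)).trans
    (prodEquivOfIsCompl P Q hPQ)⟩

section TopStablyEmbedded

variable {Λ : Type} [Ring Λ] {M : Type} [AddCommGroup M] [Module Λ M] (U : Submodule Λ M)

noncomputable def quotientRadsubEquivMapMkQ
    (hU : radsub Λ U = comap U.subtype (radsub Λ M)) :
    (U ⧸ radsub Λ U) ≃ₗ[Λ] U.map (radsub Λ M).mkQ :=
  let ψ := (radsub Λ M).mkQ ∘ₗ U.subtype
  have hker : radsub Λ U = LinearMap.ker ψ := by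
    rw [LinearMap.ker_comp, ker_mkQ, hU]
  (quotEquivOfEq _ _ hker).trans (ψ.quotKerEquivRange.trans
    (LinearEquiv.ofEq _ _ (by rw [LinearMap.range_comp, range_subtype])))

noncomputable def quotientRadsubQuotientEquiv :
    ((M ⧸ U) ⧸ radsub Λ (M ⧸ U)) ≃ₗ[Λ] (M ⧸ radsub Λ M) ⧸ U.map (radsub Λ M).mkQ :=
  (quotEquivOfEq _ _ (map_radsub_of_surjective U.mkQ_surjective).symm).trans <|
    (quotientQuotientEquivQuotientSup U (radsub Λ M)).trans <|
      (quotEquivOfEq _ _ (sup_comm _ _)).trans (quotientQuotientEquivQuotientSup _ U).symm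

theorem nonempty_quotientRadsub_prod_quotient_linearEquiv [IsSemiprimaryRing Λ]
    (hU : radsub Λ U = comap U.subtype (radsub Λ M)) :
    Nonempty (((U × (M ⧸ U)) ⧸ radsub Λ (U × (M ⧸ U))) ≃ₗ[Λ] (M ⧸ radsub Λ M)) :=
  have ⟨e⟩ := IsSemisimpleModule.nonempty_prod_quotient_linearEquiv (U.map (radsub Λ M).mkQ)
  ⟨quotientRadsubProdEquiv.trans <|
    ((quotientRadsubEquivMapMkQ U hU).prodCongr (quotientRadsubQuotientEquiv U)).trans e⟩

theorem isDegeneration_prod_quotient [Module.Finite Λ U] : IsDegeneration Λ M (U × (M ⧸ U)) := by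
  refine ⟨U, inferInstance, inferInstance, inferInstance, LinearMap.inr Λ U M ∘ₗ U.subtype,
    LinearMap.prodMap LinearMap.id U.mkQ,
    LinearMap.inr_injective.comp U.injective_subtype,
    Function.surjective_id.prodMap U.mkQ_surjective, ?_⟩
  ext ⟨z, m⟩
  simp [eq_comm]

end TopStablyEmbedded

theorem topStablyEmbedded_degeneration_general
    (K : Type) [Field K]
    (Λ : Type) [Ring Λ] [Algebra K Λ] [FiniteDimensional K Λ]
    (M : Type) [AddCommGroup M] [Module K M] [Module Λ M] [IsScalarTower K Λ M]
    [FiniteDimensional K M]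
    (U : Submodule Λ M)
    (hU : radsub Λ ↥U = Submodule.comap U.subtype (radsub Λ M)) :
    IsTopStableDegeneration Λ M (↥U × (M ⧸ U)) := by
  have : IsArtinianRing Λ := IsArtinianRing.of_finite K Λ
  have : Module.Finite Λ M := Module.Finite.of_restrictScalars_finite K Λ M
  exact ⟨isDegeneration_prod_quotient U, nonempty_quotientRadsub_prod_quotient_linearEquiv U hU⟩

/-- Proposition 2.9: for a top-stably embedded submodule `U ⊆ M` (i.e. `JU = U ∩ JM`),
the module `U ⊕ M/U` is a top-stable degeneration of `M`. -/
theorem topStablyEmbedded_degeneration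
    (K : Type) [Field K] [IsAlgClosed K]
    (Λ : Type) [Ring Λ] [Algebra K Λ] [FiniteDimensional K Λ]
    (M : Type) [AddCommGroup M] [Module K M] [Module Λ M] [IsScalarTower K Λ M]
    [FiniteDimensional K M]
    (U : Submodule Λ M)
    (hU : radsub Λ ↥U = Submodule.comap U.subtype (radsub Λ M)) :
    IsTopStableDegeneration Λ M (↥U × (M ⧸ U)) :=
  topStablyEmbedded_degeneration_general K Λ M U hU
end
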